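/- Type-based strong converse for the rate-distortion problem: let d be bounded with d̄ := max_{x,x̂} d(x,x̂), fix n ∈ ℕ and a type Q_X ∈ 𝒫_n(𝒳), and let X^n be uniformly distributed over the type class T_{Q_X}. If an (n,M)-code satisfies Pr{d(X^n, φ(f(X^n))) ≤ D} ≥ 1/n, then log M ≥ n R(Q_X, D + d̄/n) − (|𝒳| log(n+1) + 2 log n). -/

import Mathlib

/-!
Pigeonhole gives a codeword `y = φ m` that reproduces, within distortion `D`, a set `C` of at
least `|T_Q| / (n M)` sequences of type `Q`. Let `P` be the joint type of `(x i, y i)` averaged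
over `x ∈ C` and `i`: its first marginal is `Q` and its mean distortion is at most `D`, so
`R(Q, D) ≤ I(P) = H(Q) - H(X | Y)_P`. Since `x ↦ ∏ i, P (x i | y i)` is a probability vector on
sequences, Gibbs' inequality against the uniform law on `C` gives `log |C| ≤ n H(X | Y)_P`.
Finally `n H(Q) ≤ |𝒳| log (n + 1) + log |T_Q|`, because the multinomial coefficient of the type is
the largest of the at most `(n + 1) ^ |𝒳|` terms in the expansion of `n ^ n = (∑ₐ n Q a) ^ n`.
Together: `n R(Q, D) ≤ log M + |𝒳| log (n + 1) + log n`.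
-/

open scoped BigOperators

noncomputable section

/-- Probability of an event under a pmf on a finite space. -/
def Pr {Ω : Type*} [Fintype Ω] (μ : Ω → ℝ) (A : Set Ω) : ℝ :=
  ∑ ω, A.indicator μ ω

/-- Average per-letter distortion of a block. -/
def distn {α β : Type*} {n : ℕ} (d : α → β → ℝ) (xs : Fin n → α) (ys : Fin n → β) : ℝ :=
  (∑ i, d (xs i) (ys i)) / n

/-- A conditional pmf (test channel). -/
def IsChannel {α β : Type*} [Fintype β] (W : α → β → ℝ) : Prop :=
  ∀ a, (∀ b, 0 ≤ W a b) ∧ ∑ b, W a b = 1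

/-- Mutual information `I(p, W)`. -/
def mutInfo {α β : Type*} [Fintype α] [Fintype β] (p : α → ℝ) (W : α → β → ℝ) : ℝ :=
  ∑ a, ∑ b, p a * W a b * Real.log (W a b / (∑ a', p a' * W a' b))

/-- The rate-distortion function `R(p, D)`. -/
def RDfun {α β : Type*} [Fintype α] [Fintype β] (p : α → ℝ) (d : α → β → ℝ) (D : ℝ) : ℝ :=
  sInf {r | ∃ W : α → β → ℝ, IsChannel W ∧
    (∑ a, ∑ b, p a * W a b * d a b) ≤ D ∧ r = mutInfo p W}

/-- The type class of an `n`-type `Q`: sequences whose empirical distribution is `Q`. -/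
def typeClass {𝒳 : Type} [Fintype 𝒳] [DecidableEq 𝒳] (n : ℕ) (Q : 𝒳 → ℝ) :
    Set (Fin n → 𝒳) :=
  {xs | ∀ a, ((Finset.univ.filter (fun i => xs i = a)).card : ℝ) = n * Q a}

/-- Uniform pmf on a subset of a finite space. -/
def unifOn {Ω : Type*} [Fintype Ω] (T : Set Ω) : Ω → ℝ :=
  fun ω => T.indicator (fun _ => (1 : ℝ)) ω / T.ncard

open Finset Real

section Information

variable {α β ι : Type*} [Fintype α] [Fintype β]

theorem sum_mul_log_div_nonpos {s : Finset ι} {μ ν : ι → ℝ}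
    (hμ : ∀ i ∈ s, 0 ≤ μ i) (hν : ∀ i ∈ s, 0 ≤ ν i) (hac : ∀ i ∈ s, ν i = 0 → μ i = 0)
    (hle : ∑ i ∈ s, ν i ≤ ∑ i ∈ s, μ i) :
    ∑ i ∈ s, μ i * log (ν i / μ i) ≤ 0 := by
  have hterm : ∀ i ∈ s, μ i * log (ν i / μ i) ≤ ν i - μ i := by
    intro i hi
    rcases (hμ i hi).eq_or_lt with h | h
    · simp [← h, hν i hi]
    have hνi : 0 < ν i := (hν i hi).lt_of_ne fun h' => h.ne' (hac i hi h'.symm)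
    calc μ i * log (ν i / μ i) ≤ μ i * (ν i / μ i - 1) := by
          gcongr; exact log_le_sub_one_of_pos (by positivity)
      _ = ν i - μ i := by field_simp
  calc _ ≤ ∑ i ∈ s, (ν i - μ i) := sum_le_sum hterm
    _ ≤ 0 := by rw [sum_sub_distrib]; linarith

theorem card_mul_log_card_le {s : Finset ι} {ν : ι → ℝ} (hν : ∀ i ∈ s, 0 < ν i)
    (hν1 : ∑ i ∈ s, ν i ≤ 1) :
    #s * log #s ≤ -∑ i ∈ s, log (ν i) := by
  rcases s.eq_empty_or_nonempty with rfl | hs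
  · simp
  have hc : (0 : ℝ) < #s := by exact_mod_cast hs.card_pos
  have hgibbs := sum_mul_log_div_nonpos (s := s) (μ := fun _ => (#s : ℝ)⁻¹) (ν := ν)
    (fun _ _ => by positivity) (fun i hi => (hν i hi).le) (fun i hi h => absurd h (hν i hi).ne')
    (by simpa [hc.ne'] using hν1)
  have hlog : ∀ i ∈ s, log (ν i / (#s : ℝ)⁻¹) = log (ν i) + log #s := fun i hi => by
    rw [div_inv_eq_mul, log_mul (hν i hi).ne' hc.ne']
  rw [sum_congr rfl fun i hi => by rw [hlog i hi], ← mul_sum, sum_add_distrib, sum_const,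
    nsmul_eq_mul] at hgibbs
  have := (mul_nonpos_iff_pos_imp_nonpos.1 hgibbs).1 (by positivity)
  linarith

theorem mutInfo_nonneg {p : α → ℝ} {W : α → β → ℝ} (hp0 : ∀ a, 0 ≤ p a) (hp1 : ∑ a, p a = 1)
    (hW : IsChannel W) : 0 ≤ mutInfo p W := by
  set PW : β → ℝ := fun b => ∑ a', p a' * W a' b
  have hpW : ∀ a b, 0 ≤ p a * W a b := fun a b => mul_nonneg (hp0 a) ((hW a).1 b)
  have hPW : ∀ a b, p a * W a b ≤ PW b := fun a b =>
    single_le_sum (f := fun a' => p a' * W a' b) (fun a' _ => hpW a' b) (mem_univ a)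
  have hsum : ∑ a, ∑ b, p a * W a b = 1 := by simp [← mul_sum, (hW _).2, hp1]
  have hPW1 : ∑ b, PW b = 1 := by rw [sum_comm]; exact hsum
  have hgibbs := sum_mul_log_div_nonpos (s := univ ×ˢ univ)
    (μ := fun x => p x.1 * W x.1 x.2) (ν := fun x => p x.1 * PW x.2)
    (fun x _ => hpW x.1 x.2) (fun x _ => mul_nonneg (hp0 x.1) (sum_nonneg fun a _ => hpW a x.2))
    (fun x _ h => by
      rcases mul_eq_zero.1 h with h | h
      · simp [h]
      · exact le_antisymm (h ▸ hPW x.1 x.2) (hpW x.1 x.2))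
    (by simp only [sum_product, ← mul_sum, hPW1, (hW _).2, mul_one, le_refl])
  rw [sum_product] at hgibbs
  have hterm : ∀ a b, p a * W a b * log (p a * PW b / (p a * W a b))
      = -(p a * W a b * log (W a b / PW b)) := fun a b => by
    rcases eq_or_ne (p a) 0 with h | h
    · simp [h]
    · rw [mul_div_mul_left _ _ h, ← inv_div, log_inv, mul_neg]
  simp only [hterm, sum_neg_distrib] at hgibbs
  unfold mutInfo
  linarith

theorem RDfun_le_mutInfo {p : α → ℝ} {d : α → β → ℝ} {D : ℝ} {W : α → β → ℝ}
    (hp0 : ∀ a, 0 ≤ p a) (hp1 : ∑ a, p a = 1) (hW : IsChannel W)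
    (hWD : ∑ a, ∑ b, p a * W a b * d a b ≤ D) : RDfun p d D ≤ mutInfo p W :=
  csInf_le ⟨0, by rintro r ⟨W', hW', -, rfl⟩; exact mutInfo_nonneg hp0 hp1 hW'⟩ ⟨W, hW, hWD, rfl⟩

end Information

section CondChannel

variable {α β : Type*} [Fintype α] [Fintype β] {P : α → β → ℝ}

/-- `P (b | a)`; rows of zero marginal probability, which never matter, get the second marginal. -/
def condChannel (P : α → β → ℝ) (a : α) (b : β) : ℝ :=
  if ∑ b', P a b' = 0 then ∑ a', P a' b else P a b / ∑ b', P a b'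

theorem sum_mul_condChannel (hP : ∀ a b, 0 ≤ P a b) (a : α) (b : β) :
    (∑ b', P a b') * condChannel P a b = P a b := by
  unfold condChannel
  split_ifs with h
  · rw [h, zero_mul, ((sum_eq_zero_iff_of_nonneg fun b' _ => hP a b').1 h b (mem_univ b))]
  · field_simp

theorem isChannel_condChannel (hP : ∀ a b, 0 ≤ P a b) (hP1 : ∑ a, ∑ b, P a b = 1) :
    IsChannel (condChannel P) := by
  intro a
  unfold condChannel
  split_ifs with h
  · exact ⟨fun b => sum_nonneg fun a' _ => hP a' b, by rw [sum_comm, hP1]⟩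
  · exact ⟨fun b => div_nonneg (hP a b) (sum_nonneg fun b' _ => hP a b'),
      by rw [← sum_div, div_self h]⟩

/-- `I(X; Y) = H(X) - H(X | Y)` for `(X, Y) ~ P`. -/
theorem mutInfo_condChannel (hP : ∀ a b, 0 ≤ P a b) :
    mutInfo (fun a => ∑ b, P a b) (condChannel P) =
      ∑ a, negMulLog (∑ b, P a b) + ∑ a, ∑ b, P a b * log (P a b / ∑ a', P a' b) := by
  simp only [mutInfo, sum_mul_condChannel hP, negMulLog, neg_mul, sum_mul, ← sum_neg_distrib,
    ← sum_add_distrib]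
  refine sum_congr rfl fun a _ => sum_congr rfl fun b _ => ?_
  rcases (hP a b).eq_or_lt with h | h
  · simp [← h]
  have hQ : 0 < ∑ b', P a b' := h.trans_le (single_le_sum (fun b' _ => hP a b') (mem_univ b))
  have hPY : 0 < ∑ a', P a' b := h.trans_le (single_le_sum (fun a' _ => hP a' b) (mem_univ a))
  have hW : condChannel P a b = P a b / ∑ b', P a b' := if_neg hQ.ne'
  rw [hW, div_right_comm, log_div (by positivity) hQ.ne']
  ring

theorem RDfun_marginal_le (hP : ∀ a b, 0 ≤ P a b) (hP1 : ∑ a, ∑ b, P a b = 1) {d : α → β → ℝ}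
    {D : ℝ} (hPD : ∑ a, ∑ b, P a b * d a b ≤ D) :
    RDfun (fun a => ∑ b, P a b) d D ≤
      ∑ a, negMulLog (∑ b, P a b) + ∑ a, ∑ b, P a b * log (P a b / ∑ a', P a' b) := by
  rw [← mutInfo_condChannel hP]
  refine RDfun_le_mutInfo (fun a => sum_nonneg fun b _ => hP a b) hP1
    (isChannel_condChannel hP hP1) ?_
  simpa only [sum_mul_condChannel hP] using hPD

end CondChannel

section JointType

variable {α β ι : Type*} [DecidableEq α] [DecidableEq β]

theorem sum_sum_card_filter_mul [Fintype α] [Fintype β] [Fintype ι] (x : ι → α) (y : ι → β)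
    (g : α → β → ℝ) :
    ∑ a, ∑ b, (#{i | x i = a ∧ y i = b} : ℝ) * g a b = ∑ i, g (x i) (y i) := by
  simp only [card_filter, Nat.cast_sum, Nat.cast_ite, Nat.cast_one, Nat.cast_zero, sum_mul,
    boole_mul]
  conv_lhs => enter [2, a]; rw [sum_comm]
  rw [sum_comm]
  simp [ite_and]

variable {n : ℕ}

/-- The law of `(X I, y I)` for `X` uniform on `C` and `I` uniform on `Fin n`. -/
def avgJointType (C : Finset (Fin n → α)) (y : Fin n → β) (a : α) (b : β) : ℝ :=
  (∑ x ∈ C, (#{i | x i = a ∧ y i = b} : ℝ)) / (#C * n)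

variable {C : Finset (Fin n → α)} {y : Fin n → β}

theorem avgJointType_nonneg (a : α) (b : β) : 0 ≤ avgJointType C y a b := by
  unfold avgJointType; positivity

theorem sum_sum_avgJointType_mul [Fintype α] [Fintype β] (g : α → β → ℝ) :
    ∑ a, ∑ b, avgJointType C y a b * g a b = (∑ x ∈ C, ∑ i, g (x i) (y i)) / (#C * n) := by
  simp only [avgJointType, div_mul_eq_mul_div, ← sum_div, sum_mul]
  conv_lhs => enter [1, 2, a]; rw [sum_comm]
  rw [sum_comm]
  simp only [sum_sum_card_filter_mul _ y g]

theorem avgJointType_pos {x : Fin n → α} (hx : x ∈ C) (i : Fin n) :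
    0 < avgJointType C y (x i) (y i) := by
  have hC : (0 : ℝ) < #C := by exact_mod_cast card_pos.2 ⟨x, hx⟩
  have hn : (0 : ℝ) < n := by exact_mod_cast i.pos
  have hxi : (0 : ℝ) < #{j | x j = x i ∧ y j = y i} := by exact_mod_cast card_pos.2 ⟨i, by simp⟩
  exact div_pos (hxi.trans_le (single_le_sum (f := fun x' => (#{j | x' j = x i ∧ y j = y i} : ℝ))
    (fun _ _ => by positivity) hx)) (by positivity)

theorem sum_sum_avgJointType [Fintype α] [Fintype β] (hn : 0 < n) (hC : C.Nonempty) :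
    ∑ a, ∑ b, avgJointType C y a b = 1 := by
  have h := sum_sum_avgJointType_mul (C := C) (y := y) fun _ _ => 1
  have hc : (0 : ℝ) < #C := by exact_mod_cast hC.card_pos
  have hn' : (0 : ℝ) < n := by exact_mod_cast hn
  simp only [mul_one, sum_const, card_univ, Fintype.card_fin, nsmul_eq_mul] at h
  rw [h]
  field_simp

theorem sum_sum_avgJointType_mul_le [Fintype α] [Fintype β] (hn : 0 < n) (hC : C.Nonempty)
    {d : α → β → ℝ} {D : ℝ} (hCD : ∀ x ∈ C, distn d x y ≤ D) :
    ∑ a, ∑ b, avgJointType C y a b * d a b ≤ D := by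
  have hc : (0 : ℝ) < #C := by exact_mod_cast hC.card_pos
  have hn' : (0 : ℝ) < n := by exact_mod_cast hn
  have hx : ∀ x ∈ C, ∑ i, d (x i) (y i) ≤ n * D := fun x hx => by
    have := hCD x hx
    rwa [distn, div_le_iff₀ hn', mul_comm] at this
  rw [sum_sum_avgJointType_mul, div_le_iff₀ (by positivity)]
  calc ∑ x ∈ C, ∑ i, d (x i) (y i) ≤ ∑ _x ∈ C, n * D := sum_le_sum hx
    _ = D * (#C * n) := by rw [sum_const, nsmul_eq_mul]; ring

theorem log_card_le_neg_mul_sum_mul_log [Fintype α] [Fintype β] (hn : 0 < n) (hC : C.Nonempty)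
    {V : α → β → ℝ} (hV0 : ∀ a b, 0 ≤ V a b) (hV1 : ∀ b, ∑ a, V a b ≤ 1)
    (hVC : ∀ x ∈ C, ∀ i, 0 < V (x i) (y i)) :
    log #C ≤ -(n * ∑ a, ∑ b, avgJointType C y a b * log (V a b)) := by
  have hc : (0 : ℝ) < #C := by exact_mod_cast hC.card_pos
  have hsum : ∑ x ∈ C, ∏ i, V (x i) (y i) ≤ 1 := calc
    ∑ x ∈ C, ∏ i, V (x i) (y i) ≤ ∑ x : Fin n → α, ∏ i, V (x i) (y i) :=
      sum_le_univ_sum_of_nonneg fun x => prod_nonneg fun i _ => hV0 _ _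
    _ = ∏ i, ∑ a, V a (y i) := by rw [prod_univ_sum, Fintype.piFinset_univ]
    _ ≤ 1 := prod_le_one (fun i _ => sum_nonneg fun a _ => hV0 a _) fun i _ => hV1 _
  have hlog : ∑ x ∈ C, log (∏ i, V (x i) (y i)) =
      #C * n * ∑ a, ∑ b, avgJointType C y a b * log (V a b) := by
    have hn' : (0 : ℝ) < n := by exact_mod_cast hn
    rw [sum_sum_avgJointType_mul, mul_div_cancel₀ _ (by positivity)]
    exact sum_congr rfl fun x hx => log_prod fun i _ => (hVC x hx i).ne'
  have hgibbs := card_mul_log_card_le (fun x hx => prod_pos fun i _ => hVC x hx i) hsum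
  rw [hlog] at hgibbs
  refine le_of_mul_le_mul_left ?_ hc
  linarith

end JointType

section TypeClass

open scoped Nat

theorem Nat.factorial_mul_pow_le_factorial_mul_pow (j k : ℕ) : k ! * k ^ j ≤ j ! * k ^ k := by
  rcases le_total j k with h | h
  · obtain ⟨m, rfl⟩ := exists_add_of_le h
    have hdesc : (j + m)! ≤ j ! * (j + m) ^ m := by
      rw [← factorial_mul_descFactorial (le_add_left m j), add_tsub_cancel_right]
      exact Nat.mul_le_mul_left _ (descFactorial_le_pow _ _)
    calc (j + m)! * (j + m) ^ j ≤ j ! * (j + m) ^ m * (j + m) ^ j := by gcongr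
      _ = j ! * (j + m) ^ (j + m) := by ring
  · obtain ⟨m, rfl⟩ := exists_add_of_le h
    calc k ! * k ^ (k + m) = k ! * k ^ m * k ^ k := by ring
      _ ≤ k ! * (k + 1) ^ m * k ^ k := by gcongr; omega
      _ ≤ (k + m)! * k ^ k := by gcongr; exact factorial_mul_pow_le_factorial

theorem Finset.card_piAntidiag_univ_le {ι : Type*} [Fintype ι] [DecidableEq ι] (N : ℕ) :
    #(piAntidiag (univ : Finset ι) N) ≤ (N + 1) ^ Fintype.card ι := by
  calc #(piAntidiag (univ : Finset ι) N) ≤ #(Fintype.piFinset fun _ : ι => range (N + 1)) := by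
        refine card_le_card fun j hj => Fintype.mem_piFinset.2 fun i => mem_range.2 ?_
        rw [mem_piAntidiag] at hj
        exact Nat.lt_succ_of_le (hj.1 ▸ single_le_sum (fun _ _ => Nat.zero_le _) (mem_univ i))
    _ = (N + 1) ^ Fintype.card ι := by simp

/-- The term of index `k` is the largest in the multinomial expansion of `(∑ k) ^ (∑ k)`. -/
theorem Nat.pow_sum_mul_prod_factorial_le {ι : Type*} [Fintype ι] [DecidableEq ι] (k : ι → ℕ) :
    (∑ i, k i) ^ (∑ i, k i) * ∏ i, (k i)! ≤
      (∑ i, k i + 1) ^ Fintype.card ι * (∑ i, k i)! * ∏ i, k i ^ k i := by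
  set N := ∑ i, k i
  have hterm : ∀ j ∈ piAntidiag univ N,
      multinomial univ j * (∏ i, k i ^ j i) * (∏ i, (k i)!) ≤ N ! * ∏ i, k i ^ k i := by
    intro j hj
    refine Nat.le_of_mul_le_mul_right (c := ∏ i, (j i)!) ?_
      (prod_pos fun i _ => factorial_pos (j i))
    calc multinomial univ j * (∏ i, k i ^ j i) * (∏ i, (k i)!) * (∏ i, (j i)!)
        = ((∏ i, (j i)!) * multinomial univ j) * ∏ i, ((k i)! * k i ^ j i) := by
          rw [prod_mul_distrib]; ring
      _ ≤ ((∏ i, (j i)!) * multinomial univ j) * ∏ i, ((j i)! * k i ^ k i) :=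
          Nat.mul_le_mul_left _
            (prod_le_prod' fun i _ => factorial_mul_pow_le_factorial_mul_pow _ _)
      _ = N ! * (∏ i, k i ^ k i) * (∏ i, (j i)!) := by
          rw [multinomial_spec, (mem_piAntidiag.1 hj).1, prod_mul_distrib]; ring
  calc N ^ N * ∏ i, (k i)! = ∑ j ∈ piAntidiag univ N,
        multinomial univ j * (∏ i, k i ^ j i) * (∏ i, (k i)!) := by
        rw [← sum_mul]
        simpa only [Nat.cast_id] using
          congrArg (· * ∏ i, (k i)!) (sum_pow_eq_sum_piAntidiag univ k N)
    _ ≤ ∑ _j ∈ piAntidiag univ N, N ! * ∏ i, k i ^ k i := sum_le_sum hterm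
    _ ≤ (N + 1) ^ Fintype.card ι * N ! * ∏ i, k i ^ k i := by
        rw [sum_const, smul_eq_mul, mul_assoc]
        exact Nat.mul_le_mul_right _ (card_piAntidiag_univ_le N)

theorem factorial_card_le_ncard_mul_prod_factorial {ι α : Type*} [Fintype ι] [DecidableEq ι]
    [Fintype α] [DecidableEq α] (x₀ : ι → α) :
    (Fintype.card ι)! ≤
      {x : ι → α | ∀ a, #{i | x i = a} = #{i | x₀ i = a}}.ncard * ∏ a, (#{i | x₀ i = a})! := by
  let G := (Equiv.Perm ι)ᵈᵐᵃ
  have hstab : Nat.card (MulAction.stabilizer G x₀) = ∏ a, (#{i | x₀ i = a})! := by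
    rw [← Nat.card_congr (Equiv.subtypeEquiv (p := fun g : Equiv.Perm ι => x₀ ∘ g = x₀)
      DomMulAct.mk fun _ => Iff.rfl), Nat.card_eq_fintype_card, DomMulAct.stabilizer_card]
    simp only [Fintype.card_subtype]
  have horbit : MulAction.orbit G x₀ ⊆ {x | ∀ a, #{i | x i = a} = #{i | x₀ i = a}} := by
    rintro _ ⟨g, rfl⟩ a
    simp only [← Fintype.card_subtype]
    exact Fintype.card_congr ((DomMulAct.mk.symm g).subtypeEquiv fun _ => Iff.rfl)
  calc (Fintype.card ι)! = Nat.card G := by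
        rw [Nat.card_congr DomMulAct.mk.symm, Nat.card_eq_fintype_card, Fintype.card_perm]
    _ = (MulAction.orbit G x₀).ncard * ∏ a, (#{i | x₀ i = a})! := by
        rw [← Subgroup.index_mul_card, MulAction.index_stabilizer G x₀, hstab]
    _ ≤ _ := Nat.mul_le_mul_right _ (Set.ncard_le_ncard horbit (Set.toFinite _))

theorem card_pow_le_mul_ncard_mul_prod_pow {ι α : Type*} [Fintype ι] [DecidableEq ι]
    [Fintype α] [DecidableEq α] (x₀ : ι → α) :
    Fintype.card ι ^ Fintype.card ι ≤
      (Fintype.card ι + 1) ^ Fintype.card α *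
        {x : ι → α | ∀ a, #{i | x i = a} = #{i | x₀ i = a}}.ncard *
          ∏ a, #{i | x₀ i = a} ^ #{i | x₀ i = a} := by
  set k : α → ℕ := fun a => #{i | x₀ i = a}
  have hk : ∑ a, k a = Fintype.card ι := by
    simpa using sum_card_fiberwise_eq_card_filter univ univ x₀
  have hmult := Nat.pow_sum_mul_prod_factorial_le k
  rw [hk] at hmult
  refine Nat.le_of_mul_le_mul_right (c := ∏ a, (k a)!) ?_
    (prod_pos fun a _ => Nat.factorial_pos _)
  calc _ ≤ _ := hmult
    _ ≤ _ := Nat.mul_le_mul_right _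
      (Nat.mul_le_mul_left _ (factorial_card_le_ncard_mul_prod_factorial x₀))
    _ = _ := by ring

theorem typeClass_eq_of_mem {α : Type} [Fintype α] [DecidableEq α] {n : ℕ} {Q : α → ℝ}
    {x₀ : Fin n → α} (hx₀ : x₀ ∈ typeClass n Q) :
    typeClass n Q = {x | ∀ a, #{i | x i = a} = #{i | x₀ i = a}} := by
  ext x
  simp only [typeClass, Set.mem_ofPred_eq, ← hx₀ _, Nat.cast_inj]

theorem mul_entropy_eq_of_mem_typeClass {α : Type} [Fintype α] [DecidableEq α] {n : ℕ}
    (hn : 0 < n) {Q : α → ℝ} {x₀ : Fin n → α} (hx₀ : x₀ ∈ typeClass n Q) :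
    n * ∑ a, negMulLog (Q a) = n * log n - ∑ a, #{i | x₀ i = a} * log #{i | x₀ i = a} := by
  have hn' : (n : ℝ) ≠ 0 := by exact_mod_cast hn.ne'
  have hterm : ∀ a, n * negMulLog (Q a) =
      #{i | x₀ i = a} * log n - #{i | x₀ i = a} * log #{i | x₀ i = a} := fun a => by
    rw [show Q a = #{i | x₀ i = a} * (n : ℝ)⁻¹ by rw [hx₀ a]; field_simp, negMulLog_mul,
      negMulLog, negMulLog, log_inv]
    field_simp
    ring
  have hk : ∑ a, (#{i | x₀ i = a} : ℝ) = n := by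
    exact_mod_cast (by simpa using sum_card_fiberwise_eq_card_filter univ univ x₀ :
      ∑ a, #{i | x₀ i = a} = n)
  rw [mul_sum, sum_congr rfl fun a _ => hterm a, sum_sub_distrib, ← sum_mul, hk]

theorem mul_entropy_le_log_ncard_typeClass {α : Type} [Fintype α] [DecidableEq α] {n : ℕ}
    (hn : 0 < n) {Q : α → ℝ} {x₀ : Fin n → α} (hx₀ : x₀ ∈ typeClass n Q) :
    n * ∑ a, negMulLog (Q a) ≤ Fintype.card α * log (n + 1) + log (typeClass n Q).ncard := by
  set k : α → ℕ := fun a => #{i | x₀ i = a}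
  have hT : (0 : ℝ) < (typeClass n Q).ncard := by
    exact_mod_cast (Set.ncard_pos (Set.toFinite _)).2 ⟨x₀, hx₀⟩
  have hk : ∀ a ∈ univ, ((k a : ℝ) ^ k a) ≠ 0 := fun a _ => by
    exact_mod_cast Nat.pow_self_pos.ne'
  have hcount := card_pow_le_mul_ncard_mul_prod_pow x₀
  rw [Fintype.card_fin, ← typeClass_eq_of_mem hx₀] at hcount
  have hlog := log_le_log (by positivity) (show ((n ^ n : ℕ) : ℝ) ≤ _ from Nat.cast_le.2 hcount)
  push_cast at hlog
  rw [log_mul (by positivity) (prod_ne_zero_iff.2 hk), log_mul (by positivity) hT.ne',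
    log_prod hk] at hlog
  simp only [log_pow] at hlog
  rw [mul_entropy_eq_of_mem_typeClass hn hx₀]
  linarith

end TypeClass

section Codeword

variable {α β : Type} [Fintype α] [Fintype β] [DecidableEq α] [DecidableEq β] {n : ℕ}
  {C : Finset (Fin n → α)} {y : Fin n → β}

theorem sum_avgJointType_eq_of_forall_mem_typeClass {Q : α → ℝ} (hn : 0 < n) (hC : C.Nonempty)
    (hCQ : ∀ x ∈ C, x ∈ typeClass n Q) (a : α) : ∑ b, avgJointType C y a b = Q a := by
  have h := sum_sum_avgJointType_mul (C := C) (y := y) fun a' _ => if a' = a then 1 else 0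
  simp only [mul_ite, mul_one, mul_zero, sum_ite_irrel, sum_const_zero, sum_ite_eq',
    mem_univ, if_true] at h
  have hcount : ∀ x ∈ C, ∑ i, (if x i = a then (1 : ℝ) else 0) = n * Q a := fun x hx => by
    rw [sum_boole]; exact hCQ x hx a
  have hc : (0 : ℝ) < #C := by exact_mod_cast hC.card_pos
  have hn' : (0 : ℝ) < n := by exact_mod_cast hn
  rw [h, sum_congr rfl hcount, sum_const, nsmul_eq_mul]
  field_simp

theorem mul_RDfun_add_log_card_le_of_codeword {Q : α → ℝ} {d : α → β → ℝ} {D : ℝ} (hn : 0 < n)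
    (hC : C.Nonempty) (hCQ : ∀ x ∈ C, x ∈ typeClass n Q) (hCD : ∀ x ∈ C, distn d x y ≤ D) :
    n * RDfun Q d D + log #C ≤ n * ∑ a, negMulLog (Q a) := by
  have hQ : Q = fun a => ∑ b, avgJointType C y a b :=
    funext fun a => (sum_avgJointType_eq_of_forall_mem_typeClass hn hC hCQ a).symm
  have hR := RDfun_marginal_le avgJointType_nonneg (sum_sum_avgJointType hn hC)
    (sum_sum_avgJointType_mul_le hn hC hCD)
  have hPY : ∀ x ∈ C, ∀ i, 0 < ∑ a, avgJointType C y a (y i) := fun x hx i =>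
    (avgJointType_pos hx i).trans_le
      (single_le_sum (fun a _ => avgJointType_nonneg a (y i)) (mem_univ _))
  have hcard := log_card_le_neg_mul_sum_mul_log hn hC
    (fun a b => div_nonneg (avgJointType_nonneg a b)
      (sum_nonneg fun a' _ => avgJointType_nonneg a' b))
    (fun b => by rw [← sum_div]; exact div_self_le_one _)
    (fun x hx i => div_pos (avgJointType_pos hx i) (hPY x hx i))
  have := mul_le_mul_of_nonneg_left hR (Nat.cast_nonneg (α := ℝ) n)
  rw [hQ]
  linarith

end Codeword

theorem Pr_unifOn {Ω : Type*} [Fintype Ω] (T A : Set Ω) :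
    Pr (unifOn T) A = (T ∩ A).ncard / T.ncard := by
  classical
  have h : ∀ ω, A.indicator (unifOn T) ω = (if ω ∈ T ∩ A then 1 else 0) / T.ncard := fun ω => by
    by_cases hA : ω ∈ A <;> by_cases hT : ω ∈ T <;> simp [unifOn, hA, hT]
  simp only [Pr, h, ← sum_div, sum_boole, Set.ncard_eq_toFinset_card' (T ∩ A)]
  congr
  ext; simp

theorem ncard_le_mul_ncard_inter_of_one_div_le_Pr {Ω : Type*} [Fintype Ω] {T A : Set Ω} {n : ℕ}
    (hn : 0 < n) (h : 1 / n ≤ Pr (unifOn T) A) :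
    (T ∩ A).Nonempty ∧ T.ncard ≤ n * (T ∩ A).ncard := by
  rw [Pr_unifOn] at h
  have hT : (0 : ℝ) < T.ncard := by
    refine Nat.cast_pos.2 (Nat.pos_of_ne_zero fun h0 => ?_)
    rw [h0, Nat.cast_zero, div_zero] at h
    exact absurd h (not_le.2 (by positivity))
  have hle : T.ncard ≤ n * (T ∩ A).ncard := by
    rw [div_le_div_iff₀ (by exact_mod_cast hn) hT] at h
    exact_mod_cast (by linarith : (T.ncard : ℝ) ≤ n * (T ∩ A).ncard)
  refine ⟨Set.nonempty_of_ncard_ne_zero fun h0 => ?_, hle⟩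
  rw [h0, mul_zero] at hle
  exact absurd hle (not_le.2 (by exact_mod_cast hT))

theorem Finset.exists_card_le_card_fiber_mul {ι : Type*} [DecidableEq ι] {M : ℕ} {G : Finset ι}
    (hG : G.Nonempty) (f : ι → Fin M) : ∃ m, #G ≤ #{x ∈ G | f x = m} * M := by
  obtain ⟨x, hx⟩ := hG
  obtain ⟨m, -, hm⟩ := exists_max_image univ (fun m => #{x ∈ G | f x = m}) ⟨f x, mem_univ _⟩
  refine ⟨m, ?_⟩
  simpa using card_le_mul_card_image_of_maps_to (fun x _ => mem_univ (f x)) _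
    fun m' _ => hm m' (mem_univ m')

theorem log_natCast_le_log_add_log_of_le_mul {a b c : ℕ} (ha : 0 < a) (h : a ≤ b * c) :
    log a ≤ log b + log c := by
  have hbc : 0 < b * c := ha.trans_le h
  rw [← log_mul (by exact_mod_cast (Nat.pos_of_mul_pos_right hbc).ne')
    (by exact_mod_cast (Nat.pos_of_mul_pos_left hbc).ne')]
  exact log_le_log (by exact_mod_cast ha) (by exact_mod_cast h)

theorem mul_RDfun_add_log_ncard_le_of_code {α β : Type} [Fintype α] [Fintype β] [DecidableEq α]
    [DecidableEq β] {n M : ℕ} {Q : α → ℝ} {d : α → β → ℝ} {D : ℝ} (hn : 0 < n)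
    (f : (Fin n → α) → Fin M) (φ : Fin M → (Fin n → β)) {G : Set (Fin n → α)}
    (hG : G.Nonempty) (hGQ : G ⊆ typeClass n Q) (hGD : ∀ x ∈ G, distn d x (φ (f x)) ≤ D) :
    n * RDfun Q d D + log G.ncard ≤ n * ∑ a, negMulLog (Q a) + log M := by
  classical
  have hG' := Set.toFinset_nonempty.2 hG
  obtain ⟨m, hm⟩ := exists_card_le_card_fiber_mul hG' f
  have hC : {x ∈ G.toFinset | f x = m}.Nonempty :=
    card_pos.1 (Nat.pos_of_mul_pos_right (hG'.card_pos.trans_le hm))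
  have hcore := mul_RDfun_add_log_card_le_of_codeword hn hC
    (fun x hx => hGQ (Set.mem_toFinset.1 (mem_filter.1 hx).1))
    fun x hx => (mem_filter.1 hx).2 ▸ hGD x (Set.mem_toFinset.1 (mem_filter.1 hx).1)
  have hlog := log_natCast_le_log_add_log_of_le_mul hG'.card_pos hm
  rw [Set.ncard_eq_toFinset_card']
  linarith

theorem rd_type_strong_converse_general
    {𝒳 Xh : Type} [Fintype 𝒳] [DecidableEq 𝒳] [Fintype Xh]
    (d : 𝒳 → Xh → ℝ) (hd : ∀ x y, 0 ≤ d x y)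
    (dbar : ℝ) (hdbar : dbar = ⨆ x, ⨆ y, d x y)
    (D : ℝ) (n : ℕ) (hn : 0 < n)
    (Q : 𝒳 → ℝ)
    (M : ℕ) (f : (Fin n → 𝒳) → Fin M) (φ : Fin M → (Fin n → Xh))
    (hgood : (1 : ℝ) / n ≤
      Pr (unifOn (typeClass n Q)) {xs | distn d xs (φ (f xs)) ≤ D}) :
    n * RDfun Q d (D + dbar / n)
        - ((Fintype.card 𝒳) * Real.log (n + 1) + 2 * Real.log n) ≤
      Real.log M := by
  classical
  obtain ⟨⟨x₀, hx₀⟩, hTG⟩ := ncard_le_mul_ncard_inter_of_one_div_le_Pr hn hgood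
  have hdbar_nonneg : 0 ≤ dbar :=
    hdbar ▸ Real.iSup_nonneg fun x => Real.iSup_nonneg fun y => hd x y
  have hcode := mul_RDfun_add_log_ncard_le_of_code hn f φ (D := D + dbar / n) ⟨x₀, hx₀⟩
    Set.inter_subset_left fun x hx => hx.2.trans (le_add_of_nonneg_right (by positivity))
  have hentropy := mul_entropy_le_log_ncard_typeClass hn hx₀.1
  have hlog := log_natCast_le_log_add_log_of_le_mul
    ((Set.ncard_pos (Set.toFinite _)).2 ⟨x₀, hx₀.1⟩) hTG
  linarith [log_natCast_nonneg n]

/-- **Type-based strong converse for the rate-distortion problem.**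
If `X^n` is uniform on the type class of the `n`-type `Q` and an `(n,M)`-code has
non-excess-distortion probability at least `1/n`, then
`log M ≥ n R(Q, D + d̄/n) − (|𝒳| log(n+1) + 2 log n)`. -/
theorem rd_type_strong_converse
    {𝒳 Xh : Type} [Fintype 𝒳] [DecidableEq 𝒳] [Fintype Xh] [Nonempty 𝒳] [Nonempty Xh]
    (d : 𝒳 → Xh → ℝ) (hd : ∀ x y, 0 ≤ d x y)
    (dbar : ℝ) (hdbar : dbar = ⨆ x, ⨆ y, d x y)
    (D : ℝ) (n : ℕ) (hn : 0 < n)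
    (Q : 𝒳 → ℝ) (hQ0 : ∀ x, 0 ≤ Q x) (hQ1 : ∑ x, Q x = 1)
    (hQtype : ∀ a, ∃ k : ℕ, Q a = (k : ℝ) / n)
    (M : ℕ) (f : (Fin n → 𝒳) → Fin M) (φ : Fin M → (Fin n → Xh))
    (hgood : (1 : ℝ) / n ≤
      Pr (unifOn (typeClass n Q)) {xs | distn d xs (φ (f xs)) ≤ D}) :
    n * RDfun Q d (D + dbar / n)
        - ((Fintype.card 𝒳) * Real.log (n + 1) + 2 * Real.log n) ≤
      Real.log M :=
  rd_type_strong_converse_general d hd dbar hdbar D n hn Q M f φ hgood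

end
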